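/- arXiv:1905.00113 — 2 statements merged into one kernel-verified Lean document; each statement's English description precedes it below -/
import Mathlib

section
/- Let Φ be a frame for H with lower bound m_Φ, and suppose Ψ is c-quadratically close to Φ with q₀ < 1 (so Ψ is a frame). Then max{δ(R(U_Φ), R(U_Ψ)), δ(R(U_Ψ), R(U_Φ))} ≤ (1/(1 − q₀)) · √(q/m_Φ), where δ denotes the gap between closed subspaces. -/
/-!
`U_Φ f - U_Ψ f` has norm at most `√q ‖f‖`, while `√m_Φ ‖f‖ ≤ ‖U_Φ f‖`; so every vector of
`R(U_Φ)` lies within relative distance `√(q / m_Φ)` of `R(U_Ψ)`. For the other gap one needs the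
lower bound `(1 - q₀) √m_Φ ‖g‖ ≤ ‖U_Ψ g‖`: write
`g = S_Φ⁻¹ U_Φ* U_Ψ g + S_Φ⁻¹ U_Φ* (U_Φ - U_Ψ) g`, where the first term has norm at most
`‖U_Ψ g‖ / √m_Φ` and the second, paired with any `w`, is `∑ₙ ⟨g, φₙ - ψₙ⟩ ⟨S_Φ⁻¹ φₙ, w⟩`,
which is bounded by `q₀ ‖g‖ ‖w‖`.
-/

open ContinuousLinearMap MeasureTheory
open scoped InnerProductSpace ComplexConjugate

noncomputable section

notation "ℓ²" => lp (fun _ : ℕ => ℂ) 2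

variable {H : Type} [NormedAddCommGroup H] [InnerProductSpace ℂ H] [CompleteSpace H]

/-- `Φ = (φₙ)` is a frame for `H` with lower bound `m` and upper bound `M`. -/
def IsFrame (φ : ℕ → H) (m M : ℝ) : Prop :=
  0 < m ∧ 0 < M ∧ ∀ f : H,
    m * ‖f‖ ^ 2 ≤ ∑' n, ‖(inner ℂ (φ n) f : ℂ)‖ ^ 2 ∧
    ∑' n, ‖(inner ℂ (φ n) f : ℂ)‖ ^ 2 ≤ M * ‖f‖ ^ 2

/-- `Φ = (φₙ)` is a Bessel sequence with bound `M`. -/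
def IsBessel (φ : ℕ → H) (M : ℝ) : Prop :=
  0 < M ∧ ∀ f : H, ∑' n, ‖(inner ℂ (φ n) f : ℂ)‖ ^ 2 ≤ M * ‖f‖ ^ 2

/-- `U` is the analysis operator of the sequence `Φ = (φₙ)`, i.e. `U f = (⟨f, φₙ⟩)ₙ`. -/
def IsAnalysis (φ : ℕ → H) (U : H →L[ℂ] ℓ²) : Prop :=
  ∀ (f : H) (n : ℕ), U f n = (inner ℂ (φ n) f : ℂ)

/-- Orthogonal projection onto a closed submodule, as an endomorphism. -/
def orthProj {E : Type} [NormedAddCommGroup E] [InnerProductSpace ℂ E] [CompleteSpace E]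
    (K : Submodule ℂ E) (hK : IsClosed (K : Set E)) : E →L[ℂ] E :=
  haveI := hK.completeSpace_coe
  K.subtypeL.comp (K.orthogonalProjectionOnto)

/-- Orthogonal projection onto a closed submodule, with values in the submodule. -/
def orthProjTo {E : Type} [NormedAddCommGroup E] [InnerProductSpace ℂ E] [CompleteSpace E]
    (K : Submodule ℂ E) (hK : IsClosed (K : Set E)) : E →L[ℂ] K :=
  haveI := hK.completeSpace_coe
  K.orthogonalProjectionOnto

/-- The gap `δ(X, Y) = ‖(Id - P_Y)|_X‖` from `X` to a closed subspace `Y`. -/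
def gap {E : Type} [NormedAddCommGroup E] [InnerProductSpace ℂ E] [CompleteSpace E]
    (X Y : Submodule ℂ E) (hY : IsClosed (Y : Set E)) : ℝ :=
  ‖(ContinuousLinearMap.id ℂ E - orthProj Y hY).comp X.subtypeL‖

section Gap

variable {E : Type} [NormedAddCommGroup E] [InnerProductSpace ℂ E] [CompleteSpace E]

lemma norm_sub_orthProj_le (K : Submodule ℂ E) (hK : IsClosed (K : Set E)) (v : E) {y : E}
    (hy : y ∈ K) : ‖v - orthProj K hK v‖ ≤ ‖v - y‖ := by
  have := hK.completeSpace_coe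
  change ‖v - K.starProjection v‖ ≤ ‖v - y‖
  rw [Submodule.starProjection_minimal]
  exact ciInf_le ⟨0, by rintro _ ⟨x, rfl⟩; positivity⟩ (⟨y, hy⟩ : K)

lemma gap_topologicalClosure_le (X Y : Submodule ℂ E) (hY : IsClosed (Y : Set E)) {C : ℝ}
    (hC : 0 ≤ C) (h : ∀ v ∈ X, ‖v - orthProj Y hY v‖ ≤ C * ‖v‖) :
    gap X.topologicalClosure Y hY ≤ C := by
  refine opNorm_le_bound _ hC fun ⟨x, hx⟩ => ?_
  have hclosed : IsClosed {v : E | ‖v - orthProj Y hY v‖ ≤ C * ‖v‖} :=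
    isClosed_le (continuous_id.sub (orthProj Y hY).continuous).norm
      (continuous_const.mul continuous_norm)
  rw [← SetLike.mem_coe, Submodule.topologicalClosure_coe] at hx
  have hx' : x ∈ {v : E | ‖v - orthProj Y hY v‖ ≤ C * ‖v‖} := closure_minimal h hclosed hx
  simpa using hx'

lemma gap_closure_range_le_div {F : Type} [NormedAddCommGroup F] [NormedSpace ℂ F]
    (A B : F →L[ℂ] E) {a b : ℝ} (ha : 0 < a) (hb : 0 ≤ b) (hA : ∀ f, a * ‖f‖ ≤ ‖A f‖)
    (hAB : ∀ f, ‖A f - B f‖ ≤ b * ‖f‖) :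
    gap (LinearMap.range (A : F →ₗ[ℂ] E)).topologicalClosure
      (LinearMap.range (B : F →ₗ[ℂ] E)).topologicalClosure
      (Submodule.isClosed_topologicalClosure _) ≤ b / a := by
  refine gap_topologicalClosure_le _ _ _ (by positivity) ?_
  rintro _ ⟨f, rfl⟩
  have hBf := Submodule.le_topologicalClosure _ (LinearMap.mem_range_self (B : F →ₗ[ℂ] E) f)
  calc ‖A f - orthProj _ _ (A f)‖ ≤ ‖A f - B f‖ := norm_sub_orthProj_le _ _ _ hBf
    _ ≤ b * ‖f‖ := hAB f
    _ = b / a * (a * ‖f‖) := by field_simp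
    _ ≤ b / a * ‖A f‖ := by gcongr; exact hA f

end Gap

lemma norm_le_of_forall_norm_inner_le {E : Type} [NormedAddCommGroup E] [InnerProductSpace ℂ E]
    (x : E) {M : ℝ} (hM : 0 ≤ M)
    (h : ∀ y, ‖⟪x, y⟫_ℂ‖ ≤ M * ‖y‖) : ‖x‖ ≤ M := by
  rw [← innerSL_apply_norm ℂ x]
  exact opNorm_le_bound _ hM h

section Adjoint

variable {E F : Type} [NormedAddCommGroup E] [InnerProductSpace ℂ E] [CompleteSpace E]
  [NormedAddCommGroup F] [InnerProductSpace ℂ F] [CompleteSpace F]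

/-- `U x` is then the orthogonal projection of `c` onto the range of `U`. -/
lemma norm_apply_le_of_adjoint_apply_eq (U : E →L[ℂ] F) {x : E} {c : F}
    (h : adjoint U (U x) = adjoint U c) : ‖U x‖ ≤ ‖c‖ := by
  have hsq : ‖U x‖ ^ 2 ≤ ‖U x‖ * ‖c‖ := by
    rw [← inner_self_eq_norm_sq (𝕜 := ℂ), ← adjoint_inner_right, h, adjoint_inner_right]
    exact (RCLike.re_le_norm _).trans (norm_inner_le_norm _ _)
  nlinarith [norm_nonneg (U x), norm_nonneg c]

lemma isSelfAdjoint_of_comp_eq_id {S T : E →L[ℂ] E} (hS : IsSelfAdjoint S)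
    (hST : S ∘L T = ContinuousLinearMap.id ℂ E) : IsSelfAdjoint T := by
  have hTS : adjoint T ∘L S = ContinuousLinearMap.id ℂ E := by
    rw [← hS.adjoint_eq, ← adjoint_comp, hST, adjoint_id]
  calc adjoint T = (adjoint T ∘L S) ∘L T := by rw [comp_assoc, hST, comp_id]
    _ = T := by rw [hTS, id_comp]

lemma sqrt_mul_norm_rightInverse_adjoint_le {U : E →L[ℂ] F} {T : E →L[ℂ] E} {m : ℝ}
    (hU : ∀ x, m * ‖x‖ ^ 2 ≤ ‖U x‖ ^ 2)
    (hT : (adjoint U ∘L U) ∘L T = ContinuousLinearMap.id ℂ E) (c : F) :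
    √m * ‖T (adjoint U c)‖ ≤ ‖c‖ := by
  set x := T (adjoint U c)
  have hx : adjoint U (U x) = adjoint U c := congr($hT (adjoint U c))
  have hUx := norm_apply_le_of_adjoint_apply_eq U hx
  rw [← Real.sqrt_sq (norm_nonneg x), ← Real.sqrt_mul' _ (sq_nonneg _), ← Real.sqrt_sq (norm_nonneg c)]
  gcongr
  exact (hU x).trans (pow_le_pow_left₀ (norm_nonneg _) hUx 2)

end Adjoint

section Analysis

variable {E : Type} [NormedAddCommGroup E] [InnerProductSpace ℂ E]

lemma lp_two_norm_sq (x : ℓ²) : ‖x‖ ^ 2 = ∑' n, ‖x n‖ ^ 2 := by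
  have h := lp.norm_rpow_eq_tsum (p := 2) (E := fun _ : ℕ => ℂ) (by norm_num) x
  rw [show ((2 : ENNReal)).toReal = ((2 : ℕ) : ℝ) by norm_num] at h
  simpa [Real.rpow_natCast] using h

namespace IsAnalysis

variable {φ ψ : ℕ → E} {U V : E →L[ℂ] ℓ²}

lemma norm_sq_apply (hU : IsAnalysis φ U) (f : E) :
    ‖U f‖ ^ 2 = ∑' n, ‖⟪φ n, f⟫_ℂ‖ ^ 2 := by
  simp only [lp_two_norm_sq, hU f]

lemma sub (hU : IsAnalysis φ U) (hV : IsAnalysis ψ V) : IsAnalysis (φ - ψ) (U - V) := by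
  intro f n
  rw [sub_apply, lp.coeFn_sub, Pi.sub_apply, hU, hV, Pi.sub_apply, inner_sub_left]

lemma comp [CompleteSpace E] (hU : IsAnalysis φ U) (A : E →L[ℂ] E) :
    IsAnalysis (fun n => adjoint A (φ n)) (U ∘L A) := by
  intro f n
  rw [comp_apply, hU, adjoint_inner_left]

lemma norm_apply_le (hU : IsAnalysis φ U) (hφ : Summable fun n => ‖φ n‖ ^ 2) (f : E) :
    ‖U f‖ ≤ √(∑' n, ‖φ n‖ ^ 2) * ‖f‖ := by
  have hterm : ∀ n, ‖⟪φ n, f⟫_ℂ‖ ^ 2 ≤ ‖φ n‖ ^ 2 * ‖f‖ ^ 2 := fun n => by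
    rw [← mul_pow]; exact pow_le_pow_left₀ (norm_nonneg _) (norm_inner_le_norm _ _) 2
  have hsq : ‖U f‖ ^ 2 ≤ (∑' n, ‖φ n‖ ^ 2) * ‖f‖ ^ 2 := by
    rw [hU.norm_sq_apply, ← tsum_mul_right]
    exact ((hφ.mul_right _).of_nonneg_of_le (fun n => by positivity) hterm).tsum_le_tsum hterm
      (hφ.mul_right _)
  rw [← Real.sqrt_sq (norm_nonneg (U f)), ← Real.sqrt_sq (norm_nonneg f), ← Real.sqrt_mul' _ (sq_nonneg _)]
  exact Real.sqrt_le_sqrt hsq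

lemma norm_inner_le (hU : IsAnalysis φ U) (hV : IsAnalysis ψ V)
    (hs : Summable fun n => ‖φ n‖ * ‖ψ n‖) (f g : E) :
    ‖⟪U f, V g⟫_ℂ‖ ≤ (∑' n, ‖φ n‖ * ‖ψ n‖) * ‖f‖ * ‖g‖ := by
  have hterm : ∀ n, ‖⟪U f n, V g n⟫_ℂ‖ ≤ ‖φ n‖ * ‖ψ n‖ * (‖f‖ * ‖g‖) := fun n =>
    calc ‖⟪U f n, V g n⟫_ℂ‖ ≤ ‖⟪φ n, f⟫_ℂ‖ * ‖⟪ψ n, g⟫_ℂ‖ := by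
          rw [hU, hV]; exact norm_inner_le_norm _ _
      _ ≤ (‖φ n‖ * ‖f‖) * (‖ψ n‖ * ‖g‖) := by gcongr <;> exact norm_inner_le_norm _ _
      _ = ‖φ n‖ * ‖ψ n‖ * (‖f‖ * ‖g‖) := by ring
  have hsum := (hs.mul_right (‖f‖ * ‖g‖)).of_nonneg_of_le (fun n => norm_nonneg _) hterm
  calc ‖⟪U f, V g⟫_ℂ‖ = ‖∑' n, ⟪U f n, V g n⟫_ℂ‖ := by rw [lp.inner_eq_tsum]
    _ ≤ ∑' n, ‖⟪U f n, V g n⟫_ℂ‖ := norm_tsum_le_tsum_norm hsum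
    _ ≤ ∑' n, ‖φ n‖ * ‖ψ n‖ * (‖f‖ * ‖g‖) := hsum.tsum_le_tsum hterm (hs.mul_right _)
    _ = (∑' n, ‖φ n‖ * ‖ψ n‖) * ‖f‖ * ‖g‖ := by rw [tsum_mul_right, mul_assoc]

lemma norm_adjoint_apply_le [CompleteSpace E] (hU : IsAnalysis φ U) (hV : IsAnalysis ψ V)
    (hs : Summable fun n => ‖φ n‖ * ‖ψ n‖) (f : E) :
    ‖adjoint V (U f)‖ ≤ (∑' n, ‖φ n‖ * ‖ψ n‖) * ‖f‖ := by
  have hnn : 0 ≤ ∑' n, ‖φ n‖ * ‖ψ n‖ := tsum_nonneg fun n => by positivity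
  refine norm_le_of_forall_norm_inner_le _ (by positivity) fun w => ?_
  rw [adjoint_inner_left]
  exact hU.norm_inner_le hV hs f w

end IsAnalysis

lemma IsFrame.mul_norm_sq_le {φ : ℕ → E} {m M : ℝ} {U : E →L[ℂ] ℓ²} (hΦ : IsFrame φ m M)
    (hU : IsAnalysis φ U) (f : E) : m * ‖f‖ ^ 2 ≤ ‖U f‖ ^ 2 :=
  hU.norm_sq_apply f ▸ (hΦ.2.2 f).1

lemma IsFrame.sqrt_mul_norm_le {φ : ℕ → E} {m M : ℝ} {U : E →L[ℂ] ℓ²} (hΦ : IsFrame φ m M)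
    (hU : IsAnalysis φ U) (f : E) : √m * ‖f‖ ≤ ‖U f‖ := by
  rw [← Real.sqrt_sq (norm_nonneg f), ← Real.sqrt_mul hΦ.1.le, ← Real.sqrt_sq (norm_nonneg (U f))]
  exact Real.sqrt_le_sqrt (hΦ.mul_norm_sq_le hU f)

lemma IsFrame.sqrt_mul_norm_le_of_perturbation [CompleteSpace E] {φ ψ : ℕ → E} {m M : ℝ}
    {UΦ UΨ : E →L[ℂ] ℓ²} {Sinv : E →L[ℂ] E} (hΦ : IsFrame φ m M)
    (hUΦ : IsAnalysis φ UΦ) (hUΨ : IsAnalysis ψ UΨ)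
    (hinv1 : (adjoint UΦ ∘L UΦ) ∘L Sinv = ContinuousLinearMap.id ℂ E)
    (hinv2 : Sinv ∘L (adjoint UΦ ∘L UΦ) = ContinuousLinearMap.id ℂ E)
    (hs : Summable fun n => ‖φ n - ψ n‖ * ‖Sinv (φ n)‖) (g : E) :
    (1 - ∑' n, ‖φ n - ψ n‖ * ‖Sinv (φ n)‖) * √m * ‖g‖ ≤ ‖UΨ g‖ := by
  set q0 := ∑' n, ‖φ n - ψ n‖ * ‖Sinv (φ n)‖
  have hS : IsSelfAdjoint (adjoint UΦ ∘L UΦ) := by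
    rw [IsSelfAdjoint, star_eq_adjoint, adjoint_comp, adjoint_adjoint]
  have hSinv : IsSelfAdjoint Sinv := isSelfAdjoint_of_comp_eq_id hS hinv1
  set x₁ := Sinv (adjoint UΦ (UΨ g))
  set x₂ := adjoint (UΦ ∘L Sinv) ((UΦ - UΨ) g)
  have hsplit : g = x₁ + x₂ :=
    calc g = Sinv (adjoint UΦ (UΦ g)) := congr($hinv2 g).symm
      _ = x₁ + x₂ := by
        simp only [x₁, x₂, adjoint_comp, hSinv.adjoint_eq, comp_apply, sub_apply, ← map_add,
          add_sub_cancel]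
  have h₁ : √m * ‖x₁‖ ≤ ‖UΨ g‖ :=
    sqrt_mul_norm_rightInverse_adjoint_le (hΦ.mul_norm_sq_le hUΦ) hinv1 _
  have h₂ : ‖x₂‖ ≤ q0 * ‖g‖ := by
    have hV := hUΦ.comp Sinv
    simp only [hSinv.adjoint_eq] at hV
    exact (hUΦ.sub hUΨ).norm_adjoint_apply_le hV hs g
  have hg : ‖g‖ ≤ ‖x₁‖ + ‖x₂‖ := hsplit ▸ norm_add_le x₁ x₂
  have hm : 0 ≤ √m := Real.sqrt_nonneg m
  nlinarith [mul_le_mul_of_nonneg_left hg hm, mul_le_mul_of_nonneg_left h₂ hm]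

end Analysis

theorem stmt3
    (φ ψ : ℕ → H) (mΦ MΦ q q0 : ℝ)
    (UΦ UΨ : H →L[ℂ] ℓ²) (TΦ : ℓ² →L[ℂ] H) (SΦ SΦinv : H →L[ℂ] H)
    (hUΦ : IsAnalysis φ UΦ) (hUΨ : IsAnalysis ψ UΨ)
    (hTΦ : TΦ = adjoint UΦ) (hSΦ : SΦ = TΦ ∘L UΦ)
    (hinv1 : SΦ ∘L SΦinv = ContinuousLinearMap.id ℂ H)
    (hinv2 : SΦinv ∘L SΦ = ContinuousLinearMap.id ℂ H)
    (hΦ : IsFrame φ mΦ MΦ)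
    (hqs : Summable fun n => ‖φ n - ψ n‖ ^ 2)
    (hq : q = ∑' n, ‖φ n - ψ n‖ ^ 2)
    (hq0s : Summable fun n => ‖φ n - ψ n‖ * ‖SΦinv (φ n)‖)
    (hq0 : q0 = ∑' n, ‖φ n - ψ n‖ * ‖SΦinv (φ n)‖)
    (hq0lt : q0 < 1) :
    max
      (gap ((LinearMap.range (UΦ : H →ₗ[ℂ] ℓ²)).topologicalClosure) ((LinearMap.range (UΨ : H →ₗ[ℂ] ℓ²)).topologicalClosure)
        (Submodule.isClosed_topologicalClosure _))
      (gap ((LinearMap.range (UΨ : H →ₗ[ℂ] ℓ²)).topologicalClosure) ((LinearMap.range (UΦ : H →ₗ[ℂ] ℓ²)).topologicalClosure)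
        (Submodule.isClosed_topologicalClosure _))
      ≤ (1 / (1 - q0)) * Real.sqrt (q / mΦ) := by
  subst hTΦ hSΦ
  have hm : 0 < √mΦ := Real.sqrt_pos.mpr hΦ.1
  have hq0nn : 0 ≤ q0 := hq0 ▸ tsum_nonneg fun n => by positivity
  have hdiff : ∀ f, ‖UΦ f - UΨ f‖ ≤ √q * ‖f‖ := fun f => by
    simpa only [sub_apply, Pi.sub_apply, ← hq] using (hUΦ.sub hUΨ).norm_apply_le hqs f
  have hΨ : ∀ g, (1 - q0) * √mΦ * ‖g‖ ≤ ‖UΨ g‖ := fun g => by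
    simpa only [← hq0] using hΦ.sqrt_mul_norm_le_of_perturbation hUΦ hUΨ hinv1 hinv2 hq0s g
  have hΦΨ := gap_closure_range_le_div UΦ UΨ hm (Real.sqrt_nonneg q) (hΦ.sqrt_mul_norm_le hUΦ) hdiff
  have h1q : 0 < 1 - q0 := by linarith
  have hΨΦ := gap_closure_range_le_div UΨ UΦ (a := (1 - q0) * √mΦ) (by positivity)
    (Real.sqrt_nonneg q) hΨ fun g => by rw [norm_sub_rev]; exact hdiff g
  rw [Real.sqrt_div' q hΦ.1.le]
  refine max_le (hΦΨ.trans ?_) (hΨΦ.trans_eq ?_)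
  · exact le_mul_of_one_le_left (by positivity) (by rw [le_div_iff₀ h1q]; linarith)
  · field_simp
end
end

section
/- Let Φ and Ψ be frames for H, and let A₁, A₂ ∈ B(H) with ‖Id − Aᵢ‖ < 1 (i = 1, 2). For approximately dual frames Φ_{Θ₁}^{ad}(A₁) of Φ and Ψ_{Θ₂}^{ad}(A₂) of Ψ (with T_Φ Θ₁ = 0, T_Ψ Θ₂ = 0), the synthesis operators satisfy: T_{Ψ_{Θ₂}^{ad}(A₂)} − T_{Φ_{Θ₁}^{ad}(A₁)} = T_{Φ_{Θ₁}^{ad}(A₁)} (U_Φ − U_Ψ) T_{Ψ̃(0)} + Θ₂* − T_{Φ_{Θ₁}^{ad}(A₁)} P_{ker T_Ψ} − (A₁* − A₂*) T_{Ψ̃(0)}, where T_{Ψ̃(0)} = S_Ψ⁻¹ T_Ψ is the synthesis operator of the canonical dual of Ψ. -/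
open ContinuousLinearMap MeasureTheory
open scoped InnerProductSpace ComplexConjugate

noncomputable section

variable {H : Type} [NormedAddCommGroup H] [InnerProductSpace ℂ H] [CompleteSpace H]

/-! Two facts turn the identity into operator algebra: the approximately dual synthesis operator
satisfies `T_{Φ_{Θ₁}^{ad}(A₁)} U_Φ = A₁*` (because `Θ₁* U_Φ = (T_Φ Θ₁)* = 0` and `S_Φ⁻¹ S_Φ = Id`),
and `P_{ker T_Ψ} = Id - U_Ψ S_Ψ⁻¹ T_Ψ`. Substituting both, every term cancels. -/

section

variable {E F : Type} [NormedAddCommGroup E] [InnerProductSpace ℂ E] [CompleteSpace E]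
  [NormedAddCommGroup F] [InnerProductSpace ℂ F] [CompleteSpace F]

theorem orthProj_ker_adjoint_eq_id_sub (U : E →L[ℂ] F) (R : E →L[ℂ] E)
    (hR : (adjoint U ∘L U) ∘L R = ContinuousLinearMap.id ℂ E) :
    orthProj (LinearMap.ker (adjoint U : F →ₗ[ℂ] E)) (isClosed_ker (adjoint U))
      = ContinuousLinearMap.id ℂ F - U ∘L R ∘L adjoint U := by
  ext x
  have hmem : x - U (R (adjoint U x)) ∈ LinearMap.ker (adjoint U : F →ₗ[ℂ] E) := by
    have := congr($hR (adjoint U x))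
    simp only [comp_apply, id_apply] at this
    simp [this]
  have horth : x - (x - U (R (adjoint U x))) ∈ (LinearMap.ker (adjoint U : F →ₗ[ℂ] E))ᗮ := by
    rw [sub_sub_cancel]
    intro y hy
    rw [← adjoint_inner_left, show adjoint U y = 0 from hy, inner_zero_left]
  have := Submodule.eq_starProjection_of_mem_orthogonal hmem horth
  rw [Submodule.starProjection_apply] at this
  simpa only [orthProj, comp_apply, Submodule.subtypeL_apply, sub_apply, id_apply] using this

theorem adjoint_comp_eq_zero_of_adjoint_comp_eq_zero {G : Type} [NormedAddCommGroup G]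
    [InnerProductSpace ℂ G] [CompleteSpace G] (U : E →L[ℂ] F) (Θ : G →L[ℂ] F)
    (h : adjoint U ∘L Θ = 0) : adjoint Θ ∘L U = 0 := by
  simpa [adjoint_comp] using congr(adjoint $h)

end

theorem stmt9_general
    (UΦ UΨ : H →L[ℂ] ℓ²) (TΦ TΨ : ℓ² →L[ℂ] H)
    (SΦ SΦinv SΨ SΨinv A1 A2 : H →L[ℂ] H) (Θ1 Θ2 : H →L[ℂ] ℓ²)
    (hTΦ : TΦ = adjoint UΦ) (hTΨ : TΨ = adjoint UΨ)
    (hSΦ : SΦ = TΦ ∘L UΦ) (hSΨ : SΨ = TΨ ∘L UΨ)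
    (hSΦ2 : SΦinv ∘L SΦ = ContinuousLinearMap.id ℂ H)
    (hSΨ1 : SΨ ∘L SΨinv = ContinuousLinearMap.id ℂ H)
    (hΘ1 : TΦ ∘L Θ1 = 0)
    (DΦ DΨ : ℓ² →L[ℂ] H)
    (hDΦ : DΦ = adjoint A1 ∘L (SΦinv ∘L TΦ) + adjoint Θ1)
    (hDΨ : DΨ = adjoint A2 ∘L (SΨinv ∘L TΨ) + adjoint Θ2) :
    DΨ - DΦ =
      DΦ ∘L ((UΦ - UΨ) ∘L (SΨinv ∘L TΨ)) + adjoint Θ2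
        - DΦ ∘L orthProj (LinearMap.ker (TΨ : ℓ² →ₗ[ℂ] H)) (ContinuousLinearMap.isClosed_ker TΨ)
        - (adjoint A1 - adjoint A2) ∘L (SΨinv ∘L TΨ) := by
  subst hTΦ hTΨ hSΦ hSΨ
  have hDΦUΦ : DΦ ∘L UΦ = adjoint A1 := by
    rw [hDΦ, add_comp, adjoint_comp_eq_zero_of_adjoint_comp_eq_zero UΦ Θ1 hΘ1, add_zero,
      comp_assoc, comp_assoc, hSΦ2, comp_id]
  rw [orthProj_ker_adjoint_eq_id_sub UΨ SΨinv hSΨ1, hDΨ]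
  simp only [comp_sub, sub_comp, comp_id, ← comp_assoc, hDΦUΦ]
  abel

theorem stmt9
    (φ ψ : ℕ → H) (mΦ MΦ mΨ MΨ : ℝ)
    (UΦ UΨ : H →L[ℂ] ℓ²) (TΦ TΨ : ℓ² →L[ℂ] H)
    (SΦ SΦinv SΨ SΨinv A1 A2 : H →L[ℂ] H) (Θ1 Θ2 : H →L[ℂ] ℓ²)
    (hUΦ : IsAnalysis φ UΦ) (hUΨ : IsAnalysis ψ UΨ)
    (hTΦ : TΦ = adjoint UΦ) (hTΨ : TΨ = adjoint UΨ)
    (hSΦ : SΦ = TΦ ∘L UΦ) (hSΨ : SΨ = TΨ ∘L UΨ)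
    (hSΦ1 : SΦ ∘L SΦinv = ContinuousLinearMap.id ℂ H)
    (hSΦ2 : SΦinv ∘L SΦ = ContinuousLinearMap.id ℂ H)
    (hSΨ1 : SΨ ∘L SΨinv = ContinuousLinearMap.id ℂ H)
    (hSΨ2 : SΨinv ∘L SΨ = ContinuousLinearMap.id ℂ H)
    (hΦ : IsFrame φ mΦ MΦ) (hΨ : IsFrame ψ mΨ MΨ)
    (hA1 : ‖ContinuousLinearMap.id ℂ H - A1‖ < 1)
    (hA2 : ‖ContinuousLinearMap.id ℂ H - A2‖ < 1)
    (hΘ1 : TΦ ∘L Θ1 = 0) (hΘ2 : TΨ ∘L Θ2 = 0)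
    (DΦ DΨ : ℓ² →L[ℂ] H)
    (hDΦ : DΦ = adjoint A1 ∘L (SΦinv ∘L TΦ) + adjoint Θ1)
    (hDΨ : DΨ = adjoint A2 ∘L (SΨinv ∘L TΨ) + adjoint Θ2) :
    DΨ - DΦ =
      DΦ ∘L ((UΦ - UΨ) ∘L (SΨinv ∘L TΨ)) + adjoint Θ2
        - DΦ ∘L orthProj (LinearMap.ker (TΨ : ℓ² →ₗ[ℂ] H)) (ContinuousLinearMap.isClosed_ker TΨ)
        - (adjoint A1 - adjoint A2) ∘L (SΨinv ∘L TΨ) :=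
  stmt9_general UΦ UΨ TΦ TΨ SΦ SΦinv SΨ SΨinv A1 A2 Θ1 Θ2 hTΦ hTΨ hSΦ hSΨ hSΦ2 hSΨ1 hΘ1 DΦ DΨ hDΦ
    hDΨ

end
end
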